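/- For each eigenvalue of the Galerkin-projected matrix: under the hypotheses above (self-adjoint H bounded below with discrete lowest eigenvalues, orthonormal trial family of size N), each Ritz value satisfies Ẽₙ ≥ Eₙ for every n = 0,…,N−1. -/

import Mathlib

/-!
Min–max. Fix `n < N`. The eigenvectors of the Galerkin matrix belonging to its `n + 1` smallest
eigenvalues, mapped into `𝓗` through the orthonormal family `ψ`, span an `(n + 1)`-dimensional
subspace on which `⟪x, H x⟫ ≤ Ẽₙ ‖x‖²`. By counting dimensions it contains a nonzero `x`
orthogonal to `e₀, …, eₙ₋₁`, and for such `x` we have `Eₙ ‖x‖² ≤ ⟪x, H x⟫`.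

For the latter, split `x = P + y` with `P` the projection of `x` on `span {e_k : k < m}`. As the
`e_k` are eigenvectors, `H` does not mix `P` and `y`, so
`⟪x, H x⟫ ≥ Eₙ ‖P‖² + E₀ ‖y‖² = Eₙ ‖x‖² + (E₀ - Eₙ) ‖y‖²`, and `‖y‖ → 0` as `m → ∞` since the `e_k`
span a dense subspace. Only `‖y‖` is passed to the limit, so `H` need not be bounded.
-/

open scoped InnerProductSpace
open Filter Topology

section Orthonormal

variable {𝕜 E ι : Type*} [RCLike 𝕜] [NormedAddCommGroup E] [InnerProductSpace 𝕜 E]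

theorem inner_sum_smul_eq_zero_of_forall_inner_eq_zero {v : ι → E} {s : Finset ι} {y : E}
    (h : ∀ i ∈ s, ⟪v i, y⟫_𝕜 = 0) (a : ι → 𝕜) : ⟪∑ i ∈ s, a i • v i, y⟫_𝕜 = 0 := by
  simp_all [sum_inner, inner_smul_left]

theorem Orthonormal.inner_sub_sum_inner_smul {v : ι → E} (hv : Orthonormal 𝕜 v) {s : Finset ι}
    {j : ι} (hj : j ∈ s) (x : E) : ⟪v j, x - ∑ i ∈ s, ⟪v i, x⟫_𝕜 • v i⟫_𝕜 = 0 := by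
  rw [inner_sub_right, hv.inner_right_sum _ hj, sub_self]

theorem Orthonormal.norm_sub_sum_inner_smul_le {v : ι → E} (hv : Orthonormal 𝕜 v) (s : Finset ι)
    (x : E) (a : ι → 𝕜) : ‖x - ∑ i ∈ s, ⟪v i, x⟫_𝕜 • v i‖ ≤ ‖x - ∑ i ∈ s, a i • v i‖ := by
  set y := x - ∑ i ∈ s, ⟪v i, x⟫_𝕜 • v i
  have hsplit : x - ∑ i ∈ s, a i • v i = ∑ i ∈ s, (⟪v i, x⟫_𝕜 - a i) • v i + y := by
    simp only [y, sub_smul, Finset.sum_sub_distrib]; abel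
  have hperp : ⟪∑ i ∈ s, (⟪v i, x⟫_𝕜 - a i) • v i, y⟫_𝕜 = 0 :=
    inner_sum_smul_eq_zero_of_forall_inner_eq_zero (fun _ hi => hv.inner_sub_sum_inner_smul hi x) _
  rw [hsplit, mul_self_le_mul_self_iff (norm_nonneg _) (norm_nonneg _),
    norm_add_sq_eq_norm_sq_add_norm_sq_of_inner_eq_zero _ _ hperp]
  exact le_add_of_nonneg_left (mul_self_nonneg _)

theorem Orthonormal.tendsto_norm_sub_sum_range_inner_smul {e : ℕ → E} (he : Orthonormal 𝕜 e)
    (hdense : (Submodule.span 𝕜 (Set.range e)).topologicalClosure = ⊤) (x : E) :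
    Tendsto (fun m => ‖x - ∑ k ∈ Finset.range m, ⟪e k, x⟫_𝕜 • e k‖) atTop (𝓝 0) := by
  rw [Metric.tendsto_atTop]
  intro ε hε
  have hx : x ∈ closure (Submodule.span 𝕜 (Set.range e) : Set E) := by
    rw [← Submodule.topologicalClosure_coe, hdense]; trivial
  obtain ⟨z, hz, hxz⟩ := Metric.mem_closure_iff.mp hx ε hε
  obtain ⟨d, rfl⟩ := Finsupp.mem_span_range_iff_exists_finsupp.mp hz
  refine ⟨(d.support.sup id).succ, fun m hm => ?_⟩
  have hsupp : d.support ⊆ Finset.range m :=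
    d.support.subset_range_sup_succ.trans (Finset.range_subset_range.mpr hm)
  rw [Finsupp.sum_of_support_subset d hsupp _ fun i _ => zero_smul 𝕜 (e i)] at hxz
  rw [dist_zero_right, norm_norm]
  exact (he.norm_sub_sum_inner_smul_le _ x d).trans_lt (by rwa [← dist_eq_norm])

end Orthonormal

section Real

variable {E ι : Type*} [NormedAddCommGroup E] [InnerProductSpace ℝ E]

theorem Orthonormal.norm_sum_smul_sq {v : ι → E} (hv : Orthonormal ℝ v) (s : Finset ι)
    (a : ι → ℝ) : ‖∑ i ∈ s, a i • v i‖ ^ 2 = ∑ i ∈ s, a i ^ 2 := by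
  rw [← real_inner_self_eq_norm_sq, hv.inner_sum]
  simp [sq]

theorem Orthonormal.inner_sum_smul_map_sum_smul {v : ι → E} (hv : Orthonormal ℝ v) {T : E →ₗ[ℝ] E}
    {μ : ι → ℝ} (hT : ∀ i, T (v i) = μ i • v i) (s : Finset ι) (a : ι → ℝ) :
    ⟪∑ i ∈ s, a i • v i, T (∑ i ∈ s, a i • v i)⟫_ℝ = ∑ i ∈ s, μ i * a i ^ 2 := by
  simp only [map_sum, map_smul, hT, smul_smul]
  rw [hv.inner_sum]
  exact Finset.sum_congr rfl fun i _ => by rw [conj_trivial]; ring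

theorem Orthonormal.inner_map_self_le_of_mem_span {v : ι → E} [Fintype ι] (hv : Orthonormal ℝ v)
    {T : E →ₗ[ℝ] E} {μ : ι → ℝ} (hT : ∀ i, T (v i) = μ i • v i) {c : ℝ} (hμ : ∀ i, μ i ≤ c)
    {x : E} (hx : x ∈ Submodule.span ℝ (Set.range v)) : ⟪x, T x⟫_ℝ ≤ c * ‖x‖ ^ 2 := by
  obtain ⟨a, rfl⟩ := (Submodule.mem_span_range_iff_exists_fun ℝ).mp hx
  rw [hv.inner_sum_smul_map_sum_smul hT, hv.norm_sum_smul_sq, Finset.mul_sum]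
  exact Finset.sum_le_sum fun i _ => mul_le_mul_of_nonneg_right (hμ i) (sq_nonneg _)

theorem LinearMap.IsSymmetric.inner_add_map_add_of_inner_map_eq_zero {T : E →ₗ[ℝ] E}
    (hT : T.IsSymmetric) {x y : E} (h : ⟪T x, y⟫_ℝ = 0) :
    ⟪x + y, T (x + y)⟫_ℝ = ⟪x, T x⟫_ℝ + ⟪y, T y⟫_ℝ := by
  have h' : ⟪y, T x⟫_ℝ = 0 := by rwa [real_inner_comm]
  rw [map_add, inner_add_left, inner_add_right, inner_add_right, ← hT x y, h, h']
  ring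

noncomputable def Orthonormal.euclideanIsometry [Fintype ι] {v : ι → E} (hv : Orthonormal ℝ v) :
    EuclideanSpace ℝ ι →ₗᵢ[ℝ] E :=
  (Fintype.linearCombination ℝ v ∘ₗ (WithLp.linearEquiv 2 ℝ (ι → ℝ)).toLinearMap).isometryOfInner
    fun a b => by
      simp [Fintype.linearCombination_apply, hv.inner_sum, PiLp.inner_apply, mul_comm]

theorem Orthonormal.euclideanIsometry_apply [Fintype ι] {v : ι → E} (hv : Orthonormal ℝ v)
    (a : EuclideanSpace ℝ ι) : hv.euclideanIsometry a = ∑ i, a i • v i :=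
  rfl

theorem Orthonormal.inner_euclideanIsometry_map_euclideanIsometry [Fintype ι] [DecidableEq ι]
    {v : ι → E} (hv : Orthonormal ℝ v) {T : E →ₗ[ℝ] E} {M : Matrix ι ι ℝ}
    (hM : ∀ i j, M i j = ⟪v i, T (v j)⟫_ℝ) (a b : EuclideanSpace ℝ ι) :
    ⟪hv.euclideanIsometry a, T (hv.euclideanIsometry b)⟫_ℝ =
      ⟪a, Matrix.toLpLin 2 2 M b⟫_ℝ := by
  simp only [hv.euclideanIsometry_apply, map_sum, map_smul, inner_sum, inner_smul_right,
    sum_inner, inner_smul_left, Real.ringHom_apply, Finset.mul_sum, Matrix.toLpLin_apply,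
    PiLp.inner_apply, Matrix.mulVec, dotProduct, hM, RCLike.inner_apply]
  rw [Finset.sum_comm]
  refine Finset.sum_congr rfl fun i _ => ?_
  rw [Finset.sum_mul]
  exact Finset.sum_congr rfl fun j _ => by ring

end Real

theorem Submodule.exists_mem_orthogonal_ne_zero_of_finrank_lt {𝕜 E : Type*} [RCLike 𝕜]
    [NormedAddCommGroup E] [InnerProductSpace 𝕜 E] {K V : Submodule 𝕜 E} [FiniteDimensional 𝕜 K]
    [FiniteDimensional 𝕜 V] (h : Module.finrank 𝕜 K < Module.finrank 𝕜 V) :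
    ∃ x ∈ V, x ∈ Kᗮ ∧ x ≠ 0 := by
  obtain ⟨x, hx, hx0⟩ := (Submodule.ne_bot_iff _).mp <|
    LinearMap.ker_ne_bot_of_finrank_lt (f := K.orthogonalProjectionOnto.toLinearMap ∘ₗ V.subtype) h
  exact ⟨x, x.2, orthogonalProjectionOnto_eq_zero_iff.mp hx, by simpa using hx0⟩

section Eigenbasis

variable {𝓗 : Type*} [NormedAddCommGroup 𝓗] [InnerProductSpace ℝ 𝓗] {H : 𝓗 →ₗ[ℝ] 𝓗}
  {E : ℕ → ℝ} {e : ℕ → 𝓗}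

theorem mul_norm_sq_add_le_inner_map_self_of_forall_inner_eq_zero
    (hsym : H.IsSymmetric) (hE : Monotone E)
    (hbelow : ∀ x : 𝓗, E 0 * ‖x‖ ^ 2 ≤ ⟪x, H x⟫_ℝ) (he : Orthonormal ℝ e)
    (heig : ∀ n, H (e n) = E n • e n) {n : ℕ} {x : 𝓗}
    (hx : ∀ k < n, ⟪e k, x⟫_ℝ = 0) (m : ℕ) :
    E n * ‖x‖ ^ 2 + (E 0 - E n) * ‖x - ∑ k ∈ Finset.range m, ⟪e k, x⟫_ℝ • e k‖ ^ 2
      ≤ ⟪x, H x⟫_ℝ := by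
  set c := fun k => ⟪e k, x⟫_ℝ
  set P := ∑ k ∈ Finset.range m, c k • e k
  set y := x - P
  have hy : ∀ k ∈ Finset.range m, ⟪e k, y⟫_ℝ = 0 := fun k hk => he.inner_sub_sum_inner_smul hk x
  have hPy : ⟪P, y⟫_ℝ = 0 := inner_sum_smul_eq_zero_of_forall_inner_eq_zero hy c
  have hHPy : ⟪H P, y⟫_ℝ = 0 := by
    have hHP : H P = ∑ k ∈ Finset.range m, (E k * c k) • e k := by
      simp only [P, map_sum, map_smul, heig, smul_smul, mul_comm]
    rw [hHP]
    exact inner_sum_smul_eq_zero_of_forall_inner_eq_zero hy _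
  have hxPy : P + y = x := add_sub_cancel P x
  have hinner := hsym.inner_add_map_add_of_inner_map_eq_zero hHPy
  have hnorm := norm_add_sq_real P y
  rw [hxPy] at hinner hnorm
  have hPHP : E n * ‖P‖ ^ 2 ≤ ⟪P, H P⟫_ℝ := by
    rw [he.inner_sum_smul_map_sum_smul heig, he.norm_sum_smul_sq, Finset.mul_sum]
    refine Finset.sum_le_sum fun k _ => ?_
    rcases lt_or_ge k n with hk | hk
    · simp [c, hx k hk]
    · exact mul_le_mul_of_nonneg_right (hE hk) (sq_nonneg _)
  rw [hinner, hnorm, hPy]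
  nlinarith [hbelow y]

theorem mul_norm_sq_le_inner_map_self_of_forall_inner_eq_zero
    (hsym : H.IsSymmetric) (hE : Monotone E)
    (hbelow : ∀ x : 𝓗, E 0 * ‖x‖ ^ 2 ≤ ⟪x, H x⟫_ℝ) (he : Orthonormal ℝ e)
    (hdense : (Submodule.span ℝ (Set.range e)).topologicalClosure = ⊤)
    (heig : ∀ n, H (e n) = E n • e n) {n : ℕ} {x : 𝓗} (hx : ∀ k < n, ⟪e k, x⟫_ℝ = 0) :
    E n * ‖x‖ ^ 2 ≤ ⟪x, H x⟫_ℝ := by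
  have hlim := (((he.tendsto_norm_sub_sum_range_inner_smul hdense x).pow 2).const_mul
    (E 0 - E n)).const_add (E n * ‖x‖ ^ 2)
  rw [zero_pow two_ne_zero, mul_zero, add_zero] at hlim
  exact le_of_tendsto' hlim
    (mul_norm_sq_add_le_inner_map_self_of_forall_inner_eq_zero hsym hE hbelow he heig hx)

end Eigenbasis

theorem Matrix.IsHermitian.exists_orthonormal_eigenvectors_le {N : ℕ}
    {M : Matrix (Fin N) (Fin N) ℝ} (hM : M.IsHermitian) {Etil : Fin N → ℝ} (hEtil : Monotone Etil)
    {σ : Equiv.Perm (Fin N)} (hσ : ∀ i, Etil i = hM.eigenvalues (σ i)) (n : Fin N) :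
    ∃ (u : Fin (n + 1) → EuclideanSpace ℝ (Fin N)) (μ : Fin (n + 1) → ℝ), Orthonormal ℝ u ∧
      (∀ i, Matrix.toLpLin 2 2 M (u i) = μ i • u i) ∧ ∀ i, μ i ≤ Etil n := by
  have hn : (n : ℕ) + 1 ≤ N := n.isLt
  refine ⟨fun i => hM.eigenvectorBasis (σ (Fin.castLE hn i)), fun i => Etil (Fin.castLE hn i),
    hM.eigenvectorBasis.orthonormal.comp _ (σ.injective.comp (Fin.castLE_injective hn)),
    fun i => ?_, fun i => hEtil (Nat.lt_succ_iff.1 i.isLt)⟩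
  dsimp only
  rw [hσ, Matrix.toLpLin_apply, hM.mulVec_eigenvectorBasis]
  rfl

/-- Cauchy interlacing / min–max bound for Ritz values. With `H`
symmetric (self-adjoint), bounded below, with complete orthonormal eigenvectors
`e n` and sorted eigenvalues `E n`, and `ψ` an orthonormal family of size `N`,
each sorted eigenvalue `Ẽₙ` of the Galerkin matrix `⟨ψᵢ, H ψⱼ⟩` satisfies
`Ẽₙ ≥ Eₙ` for every `n = 0,…,N−1`. -/
theorem ritz_values_bound
    {𝓗 : Type*} [NormedAddCommGroup 𝓗] [InnerProductSpace ℝ 𝓗]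
    (H : 𝓗 →ₗ[ℝ] 𝓗)
    (hsym : ∀ x y : 𝓗, ⟪H x, y⟫_ℝ = ⟪x, H y⟫_ℝ)
    (E : ℕ → ℝ) (hE : Monotone E)
    (hbelow : ∀ x : 𝓗, E 0 * ‖x‖ ^ 2 ≤ ⟪x, H x⟫_ℝ)
    (e : ℕ → 𝓗) (he : Orthonormal ℝ e)
    (hcomplete : (Submodule.span ℝ (Set.range e)).topologicalClosure = ⊤)
    (heig : ∀ n, H (e n) = E n • e n)
    (N : ℕ) (ψ : Fin N → 𝓗) (hψ : Orthonormal ℝ ψ)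
    (M : Matrix (Fin N) (Fin N) ℝ)
    (hM : ∀ i j, M i j = ⟪ψ i, H (ψ j)⟫_ℝ)
    (hHerm : M.IsHermitian)
    (Etil : Fin N → ℝ) (hEtil : Monotone Etil)
    (hspec : ∃ σ : Equiv.Perm (Fin N), ∀ i, Etil i = hHerm.eigenvalues (σ i)) :
    ∀ n : Fin N, E n ≤ Etil n := by
  intro n
  obtain ⟨σ, hσ⟩ := hspec
  obtain ⟨u, μ, hu, hMu, hμ⟩ := hHerm.exists_orthonormal_eigenvectors_le hEtil hσ n
  set J := hψ.euclideanIsometry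
  set V := (Submodule.span ℝ (Set.range u)).map J.toLinearMap
  set K := Submodule.span ℝ (Set.range fun k : Fin n => e k)
  have : FiniteDimensional ℝ K := FiniteDimensional.span_of_finite ℝ (Set.finite_range _)
  have hKV : Module.finrank ℝ K < Module.finrank ℝ V := by
    rw [← (Submodule.equivMapOfInjective _ J.injective _).finrank_eq,
      finrank_span_eq_card hu.linearIndependent, Fintype.card_fin]
    exact (finrank_range_le_card _).trans_lt (by simp)
  obtain ⟨x, hxV, hxK, hx0⟩ := Submodule.exists_mem_orthogonal_ne_zero_of_finrank_lt hKV
  obtain ⟨b, hb, rfl⟩ := Submodule.mem_map.mp hxV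
  have hlow : E n * ‖J b‖ ^ 2 ≤ ⟪J b, H (J b)⟫_ℝ :=
    mul_norm_sq_le_inner_map_self_of_forall_inner_eq_zero hsym hE hbelow he hcomplete heig
      fun k hk => K.inner_right_of_mem_orthogonal (Submodule.subset_span ⟨⟨k, hk⟩, rfl⟩) hxK
  have hup : ⟪J b, H (J b)⟫_ℝ ≤ Etil n * ‖J b‖ ^ 2 := by
    rw [hψ.inner_euclideanIsometry_map_euclideanIsometry hM, J.norm_map]
    exact hu.inner_map_self_le_of_mem_span hMu hμ hb
  exact le_of_mul_le_mul_right (hlow.trans hup) (by positivity)
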